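/- Let k ≥ 1, ℓ ≥ 1 be integers, f a monic polynomial of degree d = k+ℓ over 𝔽_q, and D ⊆ 𝔽_q with |D| = n. For g ∈ 𝔽_q[x] with deg g ≤ k−1, let R(g) be the number of distinct roots of f − g in D (so that R(g) = n − d(f,g), the number of agreements between the word of f and the codeword of g). Then for every integer m ≥ 0: q^{−k}·Σ_{g : deg g ≤ k−1} R(g)^{\underline{m}} equals n^{\underline{m}}·q^{−m} if 0 ≤ m ≤ k, equals q^{−k}·m!·W_m(f) if k+1 ≤ m ≤ k+ℓ, and equals 0 if m > k+ℓ; here x^{\underline{m}} = x(x−1)⋯(x−m+1) is the falling factorial. -/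

import Mathlib

open Polynomial

/-- `Wcount D ℓ d j f` is the number of pairs `(h, S)` with `h` monic of degree `d - j` and
`S ⊆ D` of size `j` such that `h · ∏_{α ∈ S} (x - α)` agrees with `f` in the coefficients
of `x^{d-1}, …, x^{d-ℓ}`. -/
noncomputable def Wcount {F : Type*} [Field F] [DecidableEq F]
    (D : Finset F) (ℓ d j : ℕ) (f : Polynomial F) : ℕ :=
  Set.ncard {hS : Polynomial F × Finset F |
    hS.1.Monic ∧ hS.1.natDegree = d - j ∧ hS.2 ⊆ D ∧ hS.2.card = j ∧
    ∀ i, 1 ≤ i → i ≤ ℓ →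
      (hS.1 * ∏ α ∈ hS.2, (X - C α)).coeff (d - i) = f.coeff (d - i)}

/-! Expanding `R(g)^{\underline m} = m! · #{S ⊆ D : #S = m, f - g vanishes on S}`, the moment
counts the pairs `(g, S)` with `∏_{α ∈ S} (X - α) ∣ f - g`. For `m ≤ k`, interpolation at the
`m` points of `S` is a surjective linear map on polynomials of degree `< k`, so every `S` is
hit by `q^{k-m}` polynomials `g`. For `k < m ≤ k + ℓ`, writing `f - g = h · ∏_{α ∈ S} (X - α)`
matches the pairs `(g, S)` with the pairs `(h, S)` counted by `Wcount`: `deg g < k` says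
exactly that `h · ∏_{α ∈ S} (X - α)` agrees with `f` in the coefficients of
`X^{k+ℓ-1}, …, X^k`. For `m > k + ℓ`, the monic `f - g` of degree `k + ℓ` has fewer than `m`
roots. -/

open Finset Module

namespace Finset

variable {α ι : Type*}

theorem descFactorial_card_filter (s : Finset α) (p : α → Prop) [DecidablePred p] (m : ℕ) :
    (#(s.filter p)).descFactorial m =
      m.factorial * #((s.powersetCard m).filter (∀ x ∈ ·, p x)) := by
  rw [Nat.descFactorial_eq_factorial_mul_choose, ← card_powersetCard]
  congr 2
  ext S
  simp only [mem_powersetCard, mem_filter, subset_iff]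
  grind

-- The instance deciding the product filter is a parameter: when `α` is a `Fintype`, instance
-- search decides `∀ x ∈ S, _` by `Fintype.decidableForallFintype`, not `decidableDforallFinset`.
theorem sum_descFactorial_card_filter [Fintype ι] (D : Finset α) (P : ι → α → Prop)
    [∀ i, DecidablePred (P i)] [DecidablePred fun iS : ι × Finset α => ∀ x ∈ iS.2, P iS.1 x]
    (m : ℕ) :
    ∑ i, (#(D.filter (P i))).descFactorial m =
      m.factorial * #((univ ×ˢ D.powersetCard m).filter fun iS => ∀ x ∈ iS.2, P iS.1 x) := by
  rw [card_filter, sum_product, mul_sum]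
  refine sum_congr rfl fun i _ => ?_
  rw [descFactorial_card_filter, card_filter]
  congr!

end Finset

theorem LinearMap.natCard_preimage_singleton {K V W : Type*} [Field K] [AddCommGroup V]
    [Module K V] [FiniteDimensional K V] [AddCommGroup W] [Module K W] [FiniteDimensional K W]
    {φ : V →ₗ[K] W} (hφ : Function.Surjective φ) (w : W) :
    Nat.card (φ ⁻¹' {w}) = Nat.card K ^ (finrank K V - finrank K W) := by
  have hrank := φ.finrank_range_add_finrank_ker
  rw [LinearMap.range_eq_top.2 hφ, finrank_top] at hrank
  have e : φ ⁻¹' {w} ≃ LinearMap.ker φ := φ.toAddMonoidHom.fiberEquivKerOfSurjective hφ w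
  rw [Nat.card_congr e, natCard_eq_pow_finrank (K := K), ← hrank, Nat.add_sub_cancel_left]

namespace Polynomial

variable {R : Type*}

theorem sum_C_mul_X_pow_eq_ofFn [Semiring R] [DecidableEq R] {n : ℕ} (v : Fin n → R) :
    ∑ i : Fin n, C (v i) * X ^ (i : ℕ) = ofFn n v := by
  simp only [ofFn_eq_sum_monomial, C_mul_X_pow_eq_monomial]

theorem ofFn_comp_toFn_eq_id_of_degree_lt [Semiring R] [DecidableEq R] {n : ℕ} {p : R[X]}
    (hp : p.degree < n) : ofFn n (toFn n p) = p := by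
  ext i
  by_cases hi : i < n
  · simp [toFn, hi]
  · rw [ofFn_coeff_eq_zero_of_ge _ (not_lt.1 hi),
      (degree_lt_iff_coeff_zero _ _).1 hp i (not_lt.1 hi)]

theorem Monic.sub_ofFn [Ring R] [Nontrivial R] [DecidableEq R] {f : R[X]} (hf : f.Monic) {n : ℕ}
    (hn : n ≤ f.natDegree) (v : Fin n → R) :
    (f - ofFn n v).Monic ∧ (f - ofFn n v).natDegree = f.natDegree := by
  have hlt : (ofFn n v).degree < f.degree :=
    (ofFn_degree_lt v).trans_le (degree_eq_natDegree hf.ne_zero ▸ by exact_mod_cast hn)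
  exact ⟨hf.sub_of_left hlt, natDegree_eq_of_degree_eq (degree_sub_eq_left_of_degree_lt hlt)⟩

theorem degree_sub_lt_iff_coeff_eq [Ring R] {f p : R[X]} {k ℓ : ℕ} (hf : f.Monic)
    (hp : p.Monic) (hfd : f.natDegree = k + ℓ) (hpd : p.natDegree = k + ℓ) :
    (f - p).degree < k ↔ ∀ i, 1 ≤ i → i ≤ ℓ → p.coeff (k + ℓ - i) = f.coeff (k + ℓ - i) := by
  rw [degree_lt_iff_coeff_zero]
  simp only [coeff_sub, sub_eq_zero]
  refine ⟨fun h i hi1 hiℓ => (h _ (by omega)).symm, fun h j hj => ?_⟩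
  rcases lt_trichotomy j (k + ℓ) with hj' | rfl | hj'
  · simpa [Nat.sub_sub_self hj'.le] using (h (k + ℓ - j) (by omega) (by omega)).symm
  · rw [← hfd, hf.coeff_natDegree, hfd, ← hpd, hp.coeff_natDegree]
  · rw [coeff_eq_zero_of_natDegree_lt (hfd ▸ hj'), coeff_eq_zero_of_natDegree_lt (hpd ▸ hj')]

variable {K : Type*} [Field K]

theorem monic_natDegree_prod_X_sub_C (S : Finset K) :
    (∏ a ∈ S, (X - C a)).Monic ∧ (∏ a ∈ S, (X - C a)).natDegree = #S :=
  ⟨monic_prod_X_sub_C id S, natDegree_finsetProd_X_sub_C_eq_card S id⟩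

theorem prod_X_sub_C_dvd_iff (S : Finset K) (p : K[X]) :
    (∏ a ∈ S, (X - C a)) ∣ p ↔ ∀ x ∈ S, p.eval x = 0 := by
  refine ⟨fun h x hx => ?_, fun h => ?_⟩
  · exact dvd_iff_isRoot.1 (dvd_trans (Finset.dvd_prod_of_mem (fun a => X - C a) hx) h)
  · exact prod_dvd_of_coprime
      ((pairwise_coprime_X_sub_C Function.injective_id).set_pairwise _)
      fun x hx => dvd_iff_isRoot.2 (h x hx)

variable [DecidableEq K]

theorem exists_monic_mul_prod_X_sub_C_eq_sub_ofFn {f : K[X]} (hf : f.Monic) {n : ℕ}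
    (hn : n ≤ f.natDegree) {S : Finset K} {v : Fin n → K}
    (hv : ∀ x ∈ S, (f - ofFn n v).eval x = 0) :
    ∃ h : K[X], h.Monic ∧ h.natDegree = f.natDegree - #S ∧
      f - h * ∏ a ∈ S, (X - C a) = ofFn n v := by
  obtain ⟨h, hfac⟩ := (prod_X_sub_C_dvd_iff S _).2 hv
  obtain ⟨hP, hPd⟩ := monic_natDegree_prod_X_sub_C S
  obtain ⟨hmon, hnd⟩ := hf.sub_ofFn hn v
  have hh : h.Monic := hP.of_mul_monic_left (hfac ▸ hmon)
  refine ⟨h, hh, ?_, by rw [mul_comm, ← hfac, sub_sub_cancel]⟩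
  have := hP.natDegree_mul hh
  rw [← hfac, hnd, hPd] at this
  omega

theorem card_filter_eval_sub_ofFn_eq_zero_le (D : Finset K) {f : K[X]} (hf : f.Monic) {n : ℕ}
    (hn : n ≤ f.natDegree) (v : Fin n → K) :
    #(D.filter fun x => (f - ofFn n v).eval x = 0) ≤ f.natDegree := by
  obtain ⟨hmon, hnd⟩ := hf.sub_ofFn hn v
  exact hnd ▸ card_le_degree_of_subset_roots fun _ hx =>
    (mem_roots hmon.ne_zero).2 (mem_filter.1 hx).2

noncomputable def evalOfFn (S : Finset K) (n : ℕ) : (Fin n → K) →ₗ[K] (S → K) :=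
  (LinearMap.pi fun x : S => leval (x : K)) ∘ₗ ofFn n

theorem evalOfFn_apply (S : Finset K) {n : ℕ} (v : Fin n → K) (x : S) :
    evalOfFn S n v x = (ofFn n v).eval (x : K) := rfl

theorem evalOfFn_surjective {S : Finset K} {n : ℕ} (hS : #S ≤ n) :
    Function.Surjective (evalOfFn S n) := by
  intro w
  let p := Lagrange.interpolate S id fun x => if hx : x ∈ S then w ⟨x, hx⟩ else 0
  have hp : p.degree < n :=
    (Lagrange.degree_interpolate_lt _ (Set.injOn_id _)).trans_le (by exact_mod_cast hS)
  refine ⟨toFn n p, ?_⟩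
  funext x
  rw [evalOfFn_apply, ofFn_comp_toFn_eq_id_of_degree_lt hp]
  exact (Lagrange.eval_interpolate_at_node _ (Set.injOn_id _) x.2).trans (dif_pos x.2)

theorem card_filter_forall_eval_sub_ofFn_eq_zero [Fintype K] {S : Finset K} {n : ℕ}
    (hS : #S ≤ n) (f : K[X]) :
    #{v : Fin n → K | ∀ x ∈ S, (f - ofFn n v).eval x = 0} = Fintype.card K ^ (n - #S) := by
  have e : {v : Fin n → K // ∀ x ∈ S, (f - ofFn n v).eval x = 0} ≃
      evalOfFn S n ⁻¹' {fun x : S => f.eval (x : K)} :=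
    Equiv.subtypeEquivRight fun v => by
      simp only [Set.mem_preimage, Set.mem_singleton_iff, funext_iff, evalOfFn_apply,
        Subtype.forall, eval_sub, sub_eq_zero]
      exact forall₂_congr fun _ _ => eq_comm
  rw [← Fintype.card_subtype, ← Nat.card_eq_fintype_card, Nat.card_congr e,
    LinearMap.natCard_preimage_singleton (evalOfFn_surjective hS), Nat.card_eq_fintype_card,
    finrank_fin_fun, finrank_fintype_fun_eq_card, Fintype.card_coe]

end Polynomial

section

variable {K : Type*} [Field K] [Fintype K] [DecidableEq K]

noncomputable def agreementPairs (D : Finset K) (k m : ℕ) (f : K[X]) :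
    Finset ((Fin k → K) × Finset K) :=
  (univ ×ˢ D.powersetCard m).filter fun vS => ∀ x ∈ vS.2, (f - ofFn k vS.1).eval x = 0

theorem mem_agreementPairs {D : Finset K} {k m : ℕ} {f : K[X]} {vS : (Fin k → K) × Finset K} :
    vS ∈ agreementPairs D k m f ↔
      (vS.2 ⊆ D ∧ #vS.2 = m) ∧ ∀ x ∈ vS.2, (f - ofFn k vS.1).eval x = 0 := by
  simp only [agreementPairs, mem_filter, mem_product, mem_univ, true_and, mem_powersetCard]

theorem sum_descFactorial_eq_factorial_mul_card_agreementPairs (D : Finset K) (k m : ℕ)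
    (f : K[X]) :
    ∑ v : Fin k → K, (#(D.filter fun x => (f - ofFn k v).eval x = 0)).descFactorial m =
      m.factorial * #(agreementPairs D k m f) := by
  rw [sum_descFactorial_card_filter, agreementPairs]

theorem card_agreementPairs_of_le (D : Finset K) {k m : ℕ} (hm : m ≤ k) (f : K[X]) :
    #(agreementPairs D k m f) = (#D).choose m * Fintype.card K ^ (k - m) := by
  rw [agreementPairs, card_filter, sum_product_right, ← card_powersetCard, card_eq_sum_ones,
    sum_mul, one_mul]
  refine sum_congr rfl fun S hS => ?_
  have hSm := (mem_powersetCard.1 hS).2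
  rw [← card_filter, card_filter_forall_eval_sub_ofFn_eq_zero (hSm ▸ hm), hSm]

theorem card_agreementPairs {D : Finset K} {k ℓ m : ℕ} {f : K[X]} (hf : f.Monic)
    (hdeg : f.natDegree = k + ℓ) (hm : m ≤ k + ℓ) :
    #(agreementPairs D k m f) = Wcount D ℓ (k + ℓ) m f := by
  have key {h : K[X]} {S : Finset K} (hh : h.Monic) (hhd : h.natDegree = k + ℓ - m)
      (hS : #S = m) : (f - h * ∏ a ∈ S, (X - C a)).degree < k ↔
        ∀ i, 1 ≤ i → i ≤ ℓ →
          (h * ∏ a ∈ S, (X - C a)).coeff (k + ℓ - i) = f.coeff (k + ℓ - i) := by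
    obtain ⟨hP, hPd⟩ := monic_natDegree_prod_X_sub_C S
    exact degree_sub_lt_iff_coeff_eq hf (hh.mul hP) hdeg (by rw [hh.natDegree_mul hP]; omega)
  rw [Wcount, ← Set.ncard_coe_finset]
  symm
  refine Set.ncard_congr (fun hS _ => (toFn k (f - hS.1 * ∏ a ∈ hS.2, (X - C a)), hS.2))
    ?_ ?_ ?_
  · rintro ⟨h, S⟩ ⟨hh, hhd, hSD, hSm, hcoeff⟩
    rw [mem_coe, mem_agreementPairs]
    dsimp only
    rw [ofFn_comp_toFn_eq_id_of_degree_lt ((key hh hhd hSm).2 hcoeff), sub_sub_cancel]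
    exact ⟨⟨hSD, hSm⟩, (prod_X_sub_C_dvd_iff S _).1 (dvd_mul_left _ h)⟩
  · rintro ⟨h, S⟩ ⟨h', S'⟩ ⟨hh, hhd, -, hSm, hcoeff⟩ ⟨hh', hhd', -, -, hcoeff'⟩ heq
    dsimp only at hh hhd hSm hcoeff hh' hhd' hcoeff'
    obtain ⟨hv, rfl⟩ := Prod.mk.injEq _ _ _ _ ▸ heq
    have := congrArg (ofFn k) hv
    rw [ofFn_comp_toFn_eq_id_of_degree_lt ((key hh hhd hSm).2 hcoeff),
      ofFn_comp_toFn_eq_id_of_degree_lt ((key hh' hhd' hSm).2 hcoeff'), sub_right_inj] at this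
    rw [mul_right_cancel₀ (monic_natDegree_prod_X_sub_C S).1.ne_zero this]
  · rintro ⟨v, S⟩ hvS
    obtain ⟨⟨hSD, hSm⟩, hv⟩ := mem_agreementPairs.1 hvS
    obtain ⟨h, hh, hhd, hsub⟩ := exists_monic_mul_prod_X_sub_C_eq_sub_ofFn hf (by omega) hv
    rw [hdeg, hSm] at hhd
    refine ⟨(h, S), ⟨hh, hhd, hSD, hSm, (key hh hhd hSm).1 (hsub ▸ ofFn_degree_lt v)⟩, ?_⟩
    simp only [hsub, toFn_comp_ofFn_eq_id]

end

theorem factorial_moments_general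
    {F : Type*} [Field F] [Fintype F] [DecidableEq F]
    (q n k ℓ : ℕ) (hq : Fintype.card F = q) (D : Finset F) (hn : D.card = n)
    (f : Polynomial F) (hf : f.Monic) (hdeg : f.natDegree = k + ℓ)
    (m : ℕ) :
    (m ≤ k →
      (q : ℝ) ^ (-(k : ℤ)) * ∑ a : Fin k → F,
        (((D.filter (fun x =>
            (f - ∑ i : Fin k, C (a i) * X ^ (i : ℕ)).eval x = 0)).card.descFactorial m : ℝ))
        = (n.descFactorial m : ℝ) * (q : ℝ) ^ (-(m : ℤ))) ∧
    (k + 1 ≤ m → m ≤ k + ℓ →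
      (q : ℝ) ^ (-(k : ℤ)) * ∑ a : Fin k → F,
        (((D.filter (fun x =>
            (f - ∑ i : Fin k, C (a i) * X ^ (i : ℕ)).eval x = 0)).card.descFactorial m : ℝ))
        = (q : ℝ) ^ (-(k : ℤ)) * (m.factorial : ℝ) * (Wcount D ℓ (k + ℓ) m f : ℝ)) ∧
    (k + ℓ < m →
      (q : ℝ) ^ (-(k : ℤ)) * ∑ a : Fin k → F,
        (((D.filter (fun x =>
            (f - ∑ i : Fin k, C (a i) * X ^ (i : ℕ)).eval x = 0)).card.descFactorial m : ℝ))
        = 0) := by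
  simp only [sum_C_mul_X_pow_eq_ofFn, ← Nat.cast_sum]
  refine ⟨fun hm => ?_, fun _ hm => ?_, fun hm => ?_⟩
  · have hq0 : (q : ℝ) ≠ 0 := by rw [← hq]; exact_mod_cast Fintype.card_ne_zero
    have hpow : (q : ℝ) ^ (-(k : ℤ)) * (q : ℝ) ^ (k - m) = (q : ℝ) ^ (-(m : ℤ)) := by
      rw [← zpow_natCast, ← zpow_add₀ hq0, Nat.cast_sub hm]
      ring_nf
    rw [sum_descFactorial_eq_factorial_mul_card_agreementPairs, card_agreementPairs_of_le D hm,
      hq, hn, Nat.descFactorial_eq_factorial_mul_choose]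
    push_cast
    rw [← hpow]
    ring
  · rw [sum_descFactorial_eq_factorial_mul_card_agreementPairs, card_agreementPairs hf hdeg hm]
    push_cast
    ring
  · have hfew (v : Fin k → F) : #(D.filter fun x => (f - ofFn k v).eval x = 0) < m :=
      (card_filter_eval_sub_ofFn_eq_zero_le D hf (by omega) v).trans_lt (by omega)
    rw [sum_eq_zero fun v _ => Nat.descFactorial_eq_zero_iff_lt.2 (hfew v), Nat.cast_zero,
      mul_zero]

/-- Theorem 5 (factorial moments): with `R(g)` the number of distinct roots of `f - g` in `D`
for a codeword polynomial `g = Σ_{i<k} aᵢ xⁱ`, the `m`-th factorial moment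
`q^{-k} Σ_g R(g)^{\underline m}` equals `n^{\underline m} q^{-m}` for `m ≤ k`,
equals `q^{-k} m! W_m(f)` for `k+1 ≤ m ≤ k+ℓ`, and vanishes for `m > k+ℓ`. -/
theorem factorial_moments
    {F : Type*} [Field F] [Fintype F] [DecidableEq F]
    (q n k ℓ : ℕ) (hq : Fintype.card F = q) (D : Finset F) (hn : D.card = n)
    (hk : 1 ≤ k) (hl : 1 ≤ ℓ)
    (f : Polynomial F) (hf : f.Monic) (hdeg : f.natDegree = k + ℓ)
    (m : ℕ) :
    (m ≤ k →
      (q : ℝ) ^ (-(k : ℤ)) * ∑ a : Fin k → F,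
        (((D.filter (fun x =>
            (f - ∑ i : Fin k, C (a i) * X ^ (i : ℕ)).eval x = 0)).card.descFactorial m : ℝ))
        = (n.descFactorial m : ℝ) * (q : ℝ) ^ (-(m : ℤ))) ∧
    (k + 1 ≤ m → m ≤ k + ℓ →
      (q : ℝ) ^ (-(k : ℤ)) * ∑ a : Fin k → F,
        (((D.filter (fun x =>
            (f - ∑ i : Fin k, C (a i) * X ^ (i : ℕ)).eval x = 0)).card.descFactorial m : ℝ))
        = (q : ℝ) ^ (-(k : ℤ)) * (m.factorial : ℝ) * (Wcount D ℓ (k + ℓ) m f : ℝ)) ∧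
    (k + ℓ < m →
      (q : ℝ) ^ (-(k : ℤ)) * ∑ a : Fin k → F,
        (((D.filter (fun x =>
            (f - ∑ i : Fin k, C (a i) * X ^ (i : ℕ)).eval x = 0)).card.descFactorial m : ℝ))
        = 0) :=
  factorial_moments_general q n k ℓ hq D hn f hf hdeg m
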